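/- Let B be a Banach algebra and (p_n)_{n=1}^∞ a sequence of pairwise orthogonal idempotents in B (that is, p_n² = p_n for all n and p_n p_m = 0 for n ≠ m) with sup_n ‖p_n‖ < ∞. Then for each n the series b_n := Σ_{k=n}^∞ 2^{-k} p_k converges in B, and for every n one has b_1 b_2 ⋯ b_n = Σ_{k=n}^∞ 2^{-nk} p_k = b_n b_{n-1} ⋯ b_1. -/

import Mathlib

open Filter Topology

/-- `leftProd b n = b 0 * b 1 * ⋯ * b n` (the sequence is indexed starting from `0`). -/
def leftProd {B : Type*} [NonUnitalNormedRing B] (b : ℕ → B) : ℕ → B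
  | 0 => b 0
  | n + 1 => leftProd b n * b (n + 1)

/-- `rightProd b n = b n * b (n-1) * ⋯ * b 0` (the sequence is indexed starting from `0`). -/
def rightProd {B : Type*} [NonUnitalNormedRing B] (b : ℕ → B) : ℕ → B
  | 0 => b 0
  | n + 1 => b (n + 1) * rightProd b n

/-- Let `B` be a Banach algebra and `(pₙ)` a norm-bounded sequence of pairwise orthogonal
idempotents in `B`.  Then for each `n` the series `bₙ := Σ_{k ≥ n} 2⁻ᵏ pₖ` converges in `B`,
and the product of the first `n + 1` of the `bₖ`'s (in either order) equals
`Σ_{k ≥ n} 2^{-(n+1)k} pₖ`.  (Here sequences are indexed starting from `0`, so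
`leftProd b n = b₀b₁⋯bₙ` is a product of `n + 1` factors.) -/
theorem orthogonal_idempotent_series_products
    {B : Type*} [NonUnitalNormedRing B] [NormedSpace ℂ B] [IsScalarTower ℂ B B]
    [SMulCommClass ℂ B B] [CompleteSpace B]
    (p : ℕ → B) (hidem : ∀ n, p n * p n = p n)
    (horth : ∀ m n, m ≠ n → p m * p n = 0)
    (hbdd : ∃ C : ℝ, ∀ n, ‖p n‖ ≤ C) :
    ∃ b : ℕ → B,
      (∀ n, HasSum (fun k : ℕ => if n ≤ k then ((2 : ℂ) ^ k)⁻¹ • p k else 0) (b n)) ∧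
      (∀ n, HasSum (fun k : ℕ => if n ≤ k then ((2 : ℂ) ^ ((n + 1) * k))⁻¹ • p k else 0)
        (leftProd b n)) ∧
      (∀ n, leftProd b n = rightProd b n) := by
  obtain ⟨C, hC⟩ := hbdd
  -- summability of the basic series
  have hsummable : ∀ n : ℕ,
      Summable (fun k : ℕ => if n ≤ k then ((2 : ℂ) ^ k)⁻¹ • p k else 0) := by
    intro n
    apply Summable.of_norm_bounded (g := fun k => max C 0 * (2⁻¹ : ℝ) ^ k)
      ((summable_geometric_of_lt_one (by norm_num) (by norm_num)).mul_left _)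
    intro k
    by_cases h : n ≤ k
    · rw [if_pos h, norm_smul]
      have h1 : ‖((2 : ℂ) ^ k)⁻¹‖ = (2⁻¹ : ℝ) ^ k := by
        simp [norm_inv, norm_pow, inv_pow]
      rw [h1, mul_comm]
      exact mul_le_mul ((hC k).trans (le_max_left _ _)) le_rfl (by positivity)
        (le_max_right _ _)
    · rw [if_neg h, norm_zero]
      positivity
  -- multiplying a sum by a single idempotent
  have hpmul : ∀ (c : ℕ → ℂ) (m : ℕ) (a : B),
      HasSum (fun k => if m ≤ k then c k • p k else 0) a →
      ∀ j, a * p j = (if m ≤ j then c j • p j else 0) := by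
    intro c m a ha j
    have h1 : HasSum (fun k => (if m ≤ k then c k • p k else 0) * p j) (a * p j) :=
      ha.mul_right _
    have h2 : (fun k => (if m ≤ k then c k • p k else 0) * p j)
        = fun k => if k = j then (if m ≤ j then c j • p j else 0) else 0 := by
      funext k
      by_cases hk : k = j
      · subst hk
        by_cases hm : m ≤ k <;> simp [hm, smul_mul_assoc, hidem k]
      · by_cases hm : m ≤ k <;> simp [hm, hk, smul_mul_assoc, horth k j hk]
    rw [h2] at h1
    exact h1.unique (hasSum_ite_eq j _)
  have hmulp : ∀ (c : ℕ → ℂ) (m : ℕ) (a : B),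
      HasSum (fun k => if m ≤ k then c k • p k else 0) a →
      ∀ j, p j * a = (if m ≤ j then c j • p j else 0) := by
    intro c m a ha j
    have h1 : HasSum (fun k => p j * (if m ≤ k then c k • p k else 0)) (p j * a) :=
      ha.mul_left _
    have h2 : (fun k => p j * (if m ≤ k then c k • p k else 0))
        = fun k => if k = j then (if m ≤ j then c j • p j else 0) else 0 := by
      funext k
      by_cases hk : k = j
      · subst hk
        by_cases hm : m ≤ k <;> simp [hm, mul_smul_comm, hidem k]
      · by_cases hm : m ≤ k <;> simp [hm, hk, mul_smul_comm, horth j k (Ne.symm hk)]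
    rw [h2] at h1
    exact h1.unique (hasSum_ite_eq j _)
  -- product of two such sums
  have key : ∀ (c d : ℕ → ℂ) (m m' : ℕ) (a a' : B),
      HasSum (fun k => if m ≤ k then c k • p k else 0) a →
      HasSum (fun k => if m' ≤ k then d k • p k else 0) a' →
      HasSum (fun k => if max m m' ≤ k then (c k * d k) • p k else 0) (a * a') := by
    intro c d m m' a a' ha ha'
    have h1 : HasSum (fun j => a * (if m' ≤ j then d j • p j else 0)) (a * a') :=
      ha'.mul_left a
    have h2 : (fun j => a * (if m' ≤ j then d j • p j else 0)) =
        fun j => if max m m' ≤ j then (c j * d j) • p j else 0 := by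
      funext j
      by_cases hj : m' ≤ j
      · rw [if_pos hj, mul_smul_comm, hpmul c m a ha j]
        by_cases hmj : m ≤ j
        · rw [if_pos hmj, if_pos (max_le hmj hj), smul_smul, mul_comm (d j)]
        · rw [if_neg hmj, if_neg (fun h => hmj (le_trans (le_max_left _ _) h)), smul_zero]
      · rw [if_neg hj, if_neg (fun h => hj (le_trans (le_max_right _ _) h)), mul_zero]
    rwa [h2] at h1
  have key' : ∀ (c d : ℕ → ℂ) (m m' : ℕ) (a a' : B),
      HasSum (fun k => if m ≤ k then c k • p k else 0) a →
      HasSum (fun k => if m' ≤ k then d k • p k else 0) a' →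
      HasSum (fun k => if max m m' ≤ k then (c k * d k) • p k else 0) (a' * a) := by
    intro c d m m' a a' ha ha'
    have h1 : HasSum (fun j => (if m' ≤ j then d j • p j else 0) * a) (a' * a) :=
      ha'.mul_right a
    have h2 : (fun j => (if m' ≤ j then d j • p j else 0) * a) =
        fun j => if max m m' ≤ j then (c j * d j) • p j else 0 := by
      funext j
      by_cases hj : m' ≤ j
      · rw [if_pos hj, smul_mul_assoc, hmulp c m a ha j]
        by_cases hmj : m ≤ j
        · rw [if_pos hmj, if_pos (max_le hmj hj), smul_smul, mul_comm (d j)]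
        · rw [if_neg hmj, if_neg (fun h => hmj (le_trans (le_max_left _ _) h)), smul_zero]
      · rw [if_neg hj, if_neg (fun h => hj (le_trans (le_max_right _ _) h)), zero_mul]
    rwa [h2] at h1
  set b : ℕ → B := fun n => ∑' k, if n ≤ k then ((2 : ℂ) ^ k)⁻¹ • p k else 0 with hbdef
  have hb : ∀ n, HasSum (fun k : ℕ => if n ≤ k then ((2 : ℂ) ^ k)⁻¹ • p k else 0) (b n) :=
    fun n => (hsummable n).hasSum
  have hleft : ∀ n, HasSum
      (fun k : ℕ => if n ≤ k then ((2 : ℂ) ^ ((n + 1) * k))⁻¹ • p k else 0)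
      (leftProd b n) := by
    intro n
    induction n with
    | zero => simpa [leftProd, one_mul] using hb 0
    | succ n ih =>
      have h := key (fun k => ((2 : ℂ) ^ ((n + 1) * k))⁻¹) (fun k => ((2 : ℂ) ^ k)⁻¹)
        n (n + 1) _ _ ih (hb (n + 1))
      have heq : (fun k : ℕ => if max n (n + 1) ≤ k then
          (((2 : ℂ) ^ ((n + 1) * k))⁻¹ * ((2 : ℂ) ^ k)⁻¹) • p k else 0)
          = fun k : ℕ => if n + 1 ≤ k then ((2 : ℂ) ^ ((n + 1 + 1) * k))⁻¹ • p k else 0 := by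
        funext k
        have hmax : max n (n + 1) = n + 1 := max_eq_right (Nat.le_succ n)
        rw [hmax, ← mul_inv, ← pow_add]
        ring_nf
      rw [heq] at h
      exact h
  refine ⟨b, hb, hleft, ?_⟩
  intro n
  induction n with
  | zero => rfl
  | succ n ih =>
    have h1 := key (fun k => ((2 : ℂ) ^ ((n + 1) * k))⁻¹) (fun k => ((2 : ℂ) ^ k)⁻¹)
      n (n + 1) _ _ (hleft n) (hb (n + 1))
    have h2 := key' (fun k => ((2 : ℂ) ^ ((n + 1) * k))⁻¹) (fun k => ((2 : ℂ) ^ k)⁻¹)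
      n (n + 1) _ _ (hleft n) (hb (n + 1))
    have : leftProd b n * b (n + 1) = b (n + 1) * leftProd b n := h1.unique h2
    show leftProd b n * b (n + 1) = b (n + 1) * rightProd b n
    rw [this, ih]
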